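/- arXiv:2012.05484 — 4 statements merged into one kernel-verified Lean document; each statement's English description precedes it below -/
import Mathlib

section
/- In the oligopoly privacy game with payoff u_i(b_i, b_{−i}) = d²b_i/(∑_j b_j)² − C_i(d·b_i/∑_j b_j), where d > 0 and each C_i is continuous, convex, strictly increasing with C_i(0)=0 and C_i(d) < ∞: if b* is a Nash equilibrium, then for every i, ∑_{j≠i} b*_j > 0. -/
/-!
If the other players bid nothing in total, a player who bids `x > 0` is the only supplier: she
supplies all of `d` at price `d / x`, earning `d² / x - C_i d`. This is unbounded as `x → 0⁺`,
so no bid is a best response, contradicting the equilibrium property.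
-/

/-- Payoff of data holder `i` in the oligopoly privacy game:
`u_i(b) = d² b_i / (∑_j b_j)² − C_i(d b_i / ∑_j b_j)`.
(When `∑_j b_j = 0`, division by zero in Lean gives payoff `0 − C_i 0`,
matching the convention that a rejected bid yields zero payoff since `C_i 0 = 0`.) -/
noncomputable def payoff {n : ℕ} (d : ℝ) (C : Fin n → ℝ → ℝ) (i : Fin n)
    (b : Fin n → ℝ) : ℝ :=
  d ^ 2 * b i / (∑ j, b j) ^ 2 - C i (d * b i / ∑ j, b j)

/-- `b` is a Nash equilibrium: no unilateral deviation to a nonnegative bid improves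
a player's payoff. -/
def IsNash {n : ℕ} (d : ℝ) (C : Fin n → ℝ → ℝ) (b : Fin n → ℝ) : Prop :=
  (∀ i, 0 ≤ b i) ∧
    ∀ i, ∀ x : ℝ, 0 ≤ x → payoff d C i (Function.update b i x) ≤ payoff d C i b

open Finset

lemma sum_update_of_sum_erase_eq_zero {ι M : Type*} [Fintype ι] [DecidableEq ι]
    [AddCommMonoid M] {b : ι → M} {i : ι}
    (h : ∑ j ∈ univ.erase i, b j = 0) (x : M) :
    ∑ j, Function.update b i x j = x := by
  rw [sum_update_of_mem (mem_univ i), ← erase_eq, h, add_zero]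

lemma payoff_update_of_sum_erase_eq_zero {n : ℕ} (d : ℝ) (C : Fin n → ℝ → ℝ) {b : Fin n → ℝ}
    {i : Fin n} (h : ∑ j ∈ univ.erase i, b j = 0) {x : ℝ} (hx : x ≠ 0) :
    payoff d C i (Function.update b i x) = d ^ 2 / x - C i d := by
  rw [payoff, sum_update_of_sum_erase_eq_zero h, Function.update_self,
    mul_div_cancel_right₀ d hx]
  congr 1
  field_simp

lemma exists_payoff_update_gt_of_sum_erase_eq_zero {n : ℕ} {d : ℝ} (hd : d ≠ 0)
    (C : Fin n → ℝ → ℝ) {b : Fin n → ℝ} {i : Fin n} (h : ∑ j ∈ univ.erase i, b j = 0) (M : ℝ) :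
    ∃ x, 0 < x ∧ M < payoff d C i (Function.update b i x) := by
  set N := max (M + C i d) 0 + 1
  have hN : 0 < N := by positivity
  have hx : 0 < d ^ 2 / N := by positivity
  refine ⟨d ^ 2 / N, hx, ?_⟩
  rw [payoff_update_of_sum_erase_eq_zero d C h hx.ne', div_div_cancel₀ (pow_ne_zero 2 hd)]
  linarith [le_max_left (M + C i d) 0]

theorem stmt_6_general (n : ℕ) (d : ℝ) (hd : 0 < d) (C : Fin n → ℝ → ℝ)
    (bstar : Fin n → ℝ) (hNash : IsNash d C bstar) :
    ∀ i, 0 < ∑ j ∈ Finset.univ.erase i, bstar j := by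
  intro i
  obtain ⟨hnonneg, hbest⟩ := hNash
  refine (sum_nonneg fun j _ ↦ hnonneg j).lt_of_ne' fun h ↦ ?_
  obtain ⟨x, hx, hgt⟩ :=
    exists_payoff_update_gt_of_sum_erase_eq_zero hd.ne' C h (payoff d C i bstar)
  exact (hbest i x hx.le).not_gt hgt

/-- if `b*` is a Nash equilibrium of the oligopoly privacy game, then
for every `i` the other players' bids sum to a strictly positive number. -/
theorem stmt_6 (n : ℕ) (d : ℝ) (hd : 0 < d) (C : Fin n → ℝ → ℝ)
    (hCcont : ∀ i, ContinuousOn (C i) (Set.Ici 0))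
    (hCconv : ∀ i, ConvexOn ℝ (Set.Ici 0) (C i))
    (hCmono : ∀ i, StrictMonoOn (C i) (Set.Ici 0))
    (hC0 : ∀ i, C i 0 = 0)
    (bstar : Fin n → ℝ) (hNash : IsNash d C bstar) :
    ∀ i, 0 < ∑ j ∈ Finset.univ.erase i, bstar j :=
  stmt_6_general n d hd C bstar hNash
end

section
/- If b* is a Nash equilibrium of the oligopoly privacy game, then for every i, b*_i < ∑_{j≠i} b*_j; consequently each equilibrium supply q*_i = d·b*_i/∑_j b*_j is strictly less than d/2. -/
/-!
Fix a player and let `s` be the total bid of the others. When `s = 0` the player's payoff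
`d²/x - C d` is unbounded as `x → 0⁺`, so no bid is a best response. When `s > 0`, in terms
of the supply `q = d x / (x + s) ∈ [0, d)` the payoff is `q (d - q) / s - C q`. The revenue
term peaks at `q = d/2` and `C` is increasing, so no `q > d/2` is optimal; at `q = d/2` the
revenue is flat to first order while a convex increasing `C` has a positive left slope, so
lowering `q` slightly pays. Hence the equilibrium supply is `< d/2`, i.e. `b < s`.
-/

open Finset

lemma ConvexOn.exists_pos_mul_le_sub {f : ℝ → ℝ} (hconv : ConvexOn ℝ (Set.Ici 0) f)
    (hmono : StrictMonoOn f (Set.Ici 0)) {a : ℝ} (ha : 0 < a) :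
    ∃ m > 0, ∀ t, 0 < t → t ≤ a / 2 → m * t ≤ f a - f (a - t) := by
  have h0 : (0 : ℝ) ∈ Set.Ici 0 := Set.mem_Ici.2 le_rfl
  refine ⟨(f (a / 2) - f 0) / (a / 2), ?_, fun t ht hta => ?_⟩
  · exact div_pos (sub_pos.2 <| hmono h0 (by simp; positivity) (by positivity)) (by positivity)
  have hpos : 0 < a - t := by linarith
  have hfar := hconv.secant_mono h0 (x := a / 2) (y := a - t) (Set.mem_Ici.2 (by positivity))
    (Set.mem_Ici.2 hpos.le) (by positivity) hpos.ne' (by linarith)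
  have hnear := hconv.slope_mono_adjacent h0 (Set.mem_Ici.2 ha.le) hpos (by linarith)
  rw [sub_zero, sub_zero] at hfar
  rw [sub_zero, sub_sub_cancel] at hnear
  exact (le_div_iff₀ ht).1 (hfar.trans hnear)

/-- The payoff of a player bidding `x` against a total bid `s` of the others. -/
noncomputable def ownBidPayoff (d s : ℝ) (c : ℝ → ℝ) (x : ℝ) : ℝ :=
  d ^ 2 * x / (x + s) ^ 2 - c (d * x / (x + s))

/-- The same payoff as a function of the supply `q = d x / (x + s)`, for `s > 0`. -/
noncomputable def supplyPayoff (d s : ℝ) (c : ℝ → ℝ) (q : ℝ) : ℝ :=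
  q * (d - q) / s - c q

lemma payoff_update_eq {n : ℕ} (d : ℝ) (C : Fin n → ℝ → ℝ) (i : Fin n) (b : Fin n → ℝ)
    (x : ℝ) :
    payoff d C i (Function.update b i x) = ownBidPayoff d (∑ j ∈ univ.erase i, b j) (C i) x := by
  rw [payoff, ownBidPayoff, sum_update_of_mem (mem_univ i), ← erase_eq, Function.update_self]

lemma payoff_eq {n : ℕ} (d : ℝ) (C : Fin n → ℝ → ℝ) (i : Fin n) (b : Fin n → ℝ) :
    payoff d C i b = ownBidPayoff d (∑ j ∈ univ.erase i, b j) (C i) (b i) := by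
  rw [← payoff_update_eq, Function.update_eq_self]

lemma exists_ownBidPayoff_zero_gt {d : ℝ} (hd : d ≠ 0) (c : ℝ → ℝ) (y : ℝ) :
    ∃ x ≥ 0, y < ownBidPayoff d 0 c x := by
  refine ⟨d ^ 2 / (|y + c d| + 1), by positivity, ?_⟩
  have hx : d ^ 2 / (|y + c d| + 1) ≠ 0 := by positivity
  have hval : ownBidPayoff d 0 c (d ^ 2 / (|y + c d| + 1)) = |y + c d| + 1 - c d := by
    rw [ownBidPayoff, add_zero, mul_div_cancel_right₀ _ hx]
    field_simp
  rw [hval]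
  linarith [le_abs_self (y + c d)]

lemma ownBidPayoff_eq_supplyPayoff {d s : ℝ} (hs : 0 < s) (c : ℝ → ℝ) {x : ℝ} (hx : 0 ≤ x) :
    ownBidPayoff d s c x = supplyPayoff d s c (d * x / (x + s)) := by
  have : x + s ≠ 0 := by positivity
  rw [ownBidPayoff, supplyPayoff]
  congr 1
  field_simp
  ring

lemma supply_attained {d s q : ℝ} (hd : 0 < d) (hs : 0 < s) (hqd : q < d) :
    d * (s * q / (d - q)) / (s * q / (d - q) + s) = q := by
  have : d - q ≠ 0 := (sub_pos.2 hqd).ne'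
  field_simp [hd.ne']
  ring

lemma exists_supplyPayoff_gt {d s : ℝ} (hd : 0 < d) (hs : 0 < s) {c : ℝ → ℝ}
    (hconv : ConvexOn ℝ (Set.Ici 0) c) (hmono : StrictMonoOn c (Set.Ici 0)) {q : ℝ} (hq : d / 2 ≤ q) :
    ∃ q', 0 ≤ q' ∧ q' < d ∧ supplyPayoff d s c q < supplyPayoff d s c q' := by
  rcases hq.lt_or_eq with hq | rfl
  · refine ⟨d / 2, by positivity, by linarith, ?_⟩
    have hrev : q * (d - q) / s < d / 2 * (d - d / 2) / s :=
      div_lt_div_of_pos_right (by nlinarith) hs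
    have hcost : c (d / 2) < c q := hmono (by simp; positivity) (by simp; linarith) hq
    rw [supplyPayoff, supplyPayoff]
    linarith
  · obtain ⟨m, hm, hslope⟩ := hconv.exists_pos_mul_le_sub hmono (half_pos hd)
    set t := min (m * s) (d / 2) / 2 with ht
    have ht0 : 0 < t := by positivity
    have htm : t < m * s := by linarith [min_le_left (m * s) (d / 2), ht]
    have htd : t ≤ d / 2 / 2 := by linarith [min_le_right (m * s) (d / 2), ht]
    refine ⟨d / 2 - t, by linarith, by linarith, ?_⟩
    have hcost := hslope t ht0 htd
    have hrev : d / 2 * (d - d / 2) / s - (d / 2 - t) * (d - (d / 2 - t)) / s = t * (t / s) := by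
      field_simp
      ring
    have hloss : t * (t / s) < m * t := by
      rw [mul_comm m]
      exact mul_lt_mul_of_pos_left ((div_lt_iff₀ hs).2 htm) ht0
    rw [supplyPayoff, supplyPayoff]
    linarith

lemma lt_of_forall_ownBidPayoff_le {d s b : ℝ} (hd : 0 < d) {c : ℝ → ℝ}
    (hconv : ConvexOn ℝ (Set.Ici 0) c) (hmono : StrictMonoOn c (Set.Ici 0)) (hs : 0 ≤ s) (hb : 0 ≤ b)
    (hbest : ∀ x, 0 ≤ x → ownBidPayoff d s c x ≤ ownBidPayoff d s c b) : b < s := by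
  rcases hs.eq_or_lt with rfl | hs
  · obtain ⟨x, hx, hgt⟩ := exists_ownBidPayoff_zero_gt hd.ne' c (ownBidPayoff d 0 c b)
    exact absurd (hbest x hx) hgt.not_ge
  by_contra! hsb
  have hhalf : d / 2 ≤ d * b / (b + s) := by
    rw [div_le_div_iff₀ two_pos (by linarith)]
    nlinarith
  obtain ⟨q, hq0, hqd, hgt⟩ := exists_supplyPayoff_gt hd hs hconv hmono hhalf
  have hx : 0 ≤ s * q / (d - q) := div_nonneg (by positivity) (by linarith)
  have hbest' := hbest _ hx
  rw [ownBidPayoff_eq_supplyPayoff hs c hx, supply_attained hd hs hqd,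
    ownBidPayoff_eq_supplyPayoff hs c hb] at hbest'
  exact hgt.not_ge hbest'

theorem stmt_8_general (n : ℕ) (d : ℝ) (hd : 0 < d) (C : Fin n → ℝ → ℝ)
    (hCconv : ∀ i, ConvexOn ℝ (Set.Ici 0) (C i))
    (hCmono : ∀ i, StrictMonoOn (C i) (Set.Ici 0))
    (bstar : Fin n → ℝ) (hNash : IsNash d C bstar) :
    ∀ i, bstar i < (∑ j ∈ Finset.univ.erase i, bstar j) ∧
      d * bstar i / (∑ j, bstar j) < d / 2 := by
  obtain ⟨hnonneg, hbest⟩ := hNash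
  intro i
  have hlt : bstar i < ∑ j ∈ univ.erase i, bstar j :=
    lt_of_forall_ownBidPayoff_le hd (hCconv i) (hCmono i) (sum_nonneg fun j _ => hnonneg j)
      (hnonneg i) fun x hx => by rw [← payoff_update_eq, ← payoff_eq]; exact hbest i x hx
  refine ⟨hlt, ?_⟩
  rw [← add_sum_erase _ _ (mem_univ i), div_lt_div_iff₀ (by linarith [hnonneg i]) two_pos]
  nlinarith

/-- at a Nash equilibrium `b*`, every player's bid is strictly less
than the sum of the others' bids, and hence each equilibrium supply
`q*_i = d b*_i / ∑_j b*_j` is strictly less than `d/2`. -/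
theorem stmt_8 (n : ℕ) (hn : 3 ≤ n) (d : ℝ) (hd : 0 < d) (C : Fin n → ℝ → ℝ)
    (hCdiff : ∀ i, DifferentiableOn ℝ (C i) (Set.Ici 0))
    (hCconv : ∀ i, ConvexOn ℝ (Set.Ici 0) (C i))
    (hCmono : ∀ i, StrictMonoOn (C i) (Set.Ici 0))
    (hC0 : ∀ i, C i 0 = 0)
    (bstar : Fin n → ℝ) (hNash : IsNash d C bstar) :
    ∀ i, bstar i < (∑ j ∈ Finset.univ.erase i, bstar j) ∧
      d * bstar i / (∑ j, bstar j) < d / 2 :=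
  stmt_8_general n d hd C hCconv hCmono bstar hNash
end

section
/- When n = 2, the oligopoly privacy game has no Nash equilibrium. -/
/-!
Against an opponent bidding `0`, a positive bid can be halved to double the first payoff term
without changing the sold share, and when both bid `0` a small positive bid earns an arbitrarily
large payoff; so in an equilibrium both bids are positive. Each bid is then an interior maximum,
and the first-order condition `d (b_j - b_i) / (b_i + b_j) = C_i'(q) b_j`, where
`q = d b_i / (b_i + b_j)` and `C_i'(q) > 0` by convexity and strict monotonicity, forces
`b_i < b_j` for both `i`, which is impossible.
-/

open Set

lemma ConvexOn.pos_of_hasDerivAt_of_strictMonoOn {s : Set ℝ} {f : ℝ → ℝ} {x y f' : ℝ}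
    (hconv : ConvexOn ℝ s f) (hmono : StrictMonoOn f s) (hx : x ∈ s) (hy : y ∈ s)
    (hxy : x < y) (hf : HasDerivAt f f' y) : 0 < f' :=
  (hmono.slope_pos hx hy hxy.ne).trans_le (hconv.slope_le_of_hasDerivAt hx hy hxy hf)

/-- The own bid `x` comes last, so that `duopolyPayoff d c y` is the objective of a best
response to the opponent's bid `y`. -/
noncomputable def duopolyPayoff (d : ℝ) (c : ℝ → ℝ) (y x : ℝ) : ℝ :=
  d ^ 2 * x / (x + y) ^ 2 - c (d * x / (x + y))

section DuopolyPayoff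

variable {d : ℝ} {c : ℝ → ℝ}

lemma duopolyPayoff_zero_right {x : ℝ} (hx : x ≠ 0) :
    duopolyPayoff d c 0 x = d ^ 2 / x - c d := by
  simp only [duopolyPayoff, add_zero]
  field_simp

lemma not_isMaxOn_duopolyPayoff_zero (hd : d ≠ 0) {a : ℝ} (ha : 0 ≤ a) :
    ¬ IsMaxOn (duopolyPayoff d c 0) (Ici 0) a := by
  intro hmax
  rcases ha.eq_or_lt with rfl | ha
  · -- `0 / 0 = 0`, so bidding `0` against `0` earns `-c 0`
    have hx : 0 < d ^ 2 / (|c d - c 0| + 1) := by positivity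
    have h := hmax (mem_Ici.2 hx.le)
    rw [mem_ofPred_eq, duopolyPayoff_zero_right hx.ne', div_div_cancel₀ (by positivity)] at h
    simp only [duopolyPayoff, add_zero, mul_zero, zero_div] at h
    linarith [le_abs_self (c d - c 0)]
  · have h := hmax (mem_Ici.2 (half_pos ha).le)
    rw [mem_ofPred_eq, duopolyPayoff_zero_right (half_pos ha).ne',
      duopolyPayoff_zero_right ha.ne', div_div_eq_mul_div] at h
    have : 0 < d ^ 2 / a := by positivity
    linarith [show d ^ 2 * 2 / a = 2 * (d ^ 2 / a) by ring]

lemma hasDerivAt_duopolyPayoff {x y c' : ℝ} (hxy : x + y ≠ 0)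
    (hc : HasDerivAt c c' (d * x / (x + y))) :
    HasDerivAt (duopolyPayoff d c y)
      (d ^ 2 * (y - x) / (x + y) ^ 3 - c' * (d * y / (x + y) ^ 2)) x := by
  have hsum : HasDerivAt (fun x => x + y) 1 x := (hasDerivAt_id' x).add_const y
  have hgross :
      HasDerivAt (fun x => d ^ 2 * x / (x + y) ^ 2) (d ^ 2 * (y - x) / (x + y) ^ 3) x := by
    refine (((hasDerivAt_id' x).const_mul (d ^ 2)).fun_div (hsum.fun_pow 2)
      (pow_ne_zero 2 hxy)).congr_deriv ?_
    field_simp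
    ring
  have hshare : HasDerivAt (fun x => d * x / (x + y)) (d * y / (x + y) ^ 2) x := by
    refine (((hasDerivAt_id' x).const_mul d).fun_div hsum hxy).congr_deriv ?_
    field_simp
    ring
  exact hgross.sub (hc.comp x hshare)

lemma lt_of_isLocalMax_duopolyPayoff (hd : 0 < d) {x y c' : ℝ} (hx : 0 < x) (hy : 0 < y)
    (hc : HasDerivAt c c' (d * x / (x + y))) (hc' : 0 < c')
    (hmax : IsLocalMax (duopolyPayoff d c y) x) : x < y := by
  have hfoc := hmax.hasDerivAt_eq_zero (hasDerivAt_duopolyPayoff (by positivity) hc)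
  rw [sub_eq_zero] at hfoc
  have hgross : 0 < d ^ 2 * (y - x) / (x + y) ^ 3 := hfoc ▸ by positivity
  exact sub_pos.1 <| (mul_pos_iff_of_pos_left (by positivity)).1 <|
    (div_pos_iff_of_pos_right (by positivity)).1 hgross

end DuopolyPayoff

section FinTwo

variable {d : ℝ} {C : Fin 2 → ℝ → ℝ} {b : Fin 2 → ℝ} {i j : Fin 2}

lemma payoff_update_eq_duopolyPayoff (hij : i ≠ j) (x : ℝ) :
    payoff d C i (Function.update b i x) = duopolyPayoff d (C i) (b j) x := by
  have hsum : ∀ b' : Fin 2 → ℝ, ∑ k, b' k = b' i + b' j := by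
    fin_cases i <;> fin_cases j <;> simp_all [Fin.sum_univ_two, add_comm]
  rw [payoff, duopolyPayoff, hsum, Function.update_self, Function.update_of_ne hij.symm]

lemma IsNash.isMaxOn (h : IsNash d C b) (hij : i ≠ j) :
    IsMaxOn (duopolyPayoff d (C i) (b j)) (Ici 0) (b i) := by
  intro x hx
  have hself : payoff d C i b = duopolyPayoff d (C i) (b j) (b i) := by
    simpa using payoff_update_eq_duopolyPayoff (d := d) (C := C) (b := b) hij (b i)
  rw [mem_ofPred_eq, ← payoff_update_eq_duopolyPayoff hij, ← hself]
  exact h.2 i x hx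

lemma IsNash.pos (hd : d ≠ 0) (h : IsNash d C b) (hij : i ≠ j) : 0 < b j := by
  refine (h.1 j).lt_of_ne fun hj => ?_
  have hmax := h.isMaxOn hij
  rw [← hj] at hmax
  exact not_isMaxOn_duopolyPayoff_zero hd (h.1 i) hmax

lemma IsNash.lt (hd : 0 < d) (hCdiff : DifferentiableOn ℝ (C i) (Ici 0))
    (hCconv : ConvexOn ℝ (Ici 0) (C i)) (hCmono : StrictMonoOn (C i) (Ici 0))
    (h : IsNash d C b) (hij : i ≠ j) : b i < b j := by
  have hi := h.pos hd.ne' hij.symm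
  have hj := h.pos hd.ne' hij
  have hq : 0 < d * b i / (b i + b j) := by positivity
  have hC := ((hCdiff _ hq.le).differentiableAt (Ici_mem_nhds hq)).hasDerivAt
  have hC' := hCconv.pos_of_hasDerivAt_of_strictMonoOn hCmono self_mem_Ici hq.le hq hC
  exact lt_of_isLocalMax_duopolyPayoff hd hi hj hC hC'
    ((h.isMaxOn hij).isLocalMax (Ici_mem_nhds hi))

end FinTwo

theorem stmt_9_general (d : ℝ) (hd : 0 < d) (C : Fin 2 → ℝ → ℝ)
    (hCdiff : ∀ i, DifferentiableOn ℝ (C i) (Set.Ici 0))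
    (hCconv : ∀ i, ConvexOn ℝ (Set.Ici 0) (C i))
    (hCmono : ∀ i, StrictMonoOn (C i) (Set.Ici 0)) :
    ¬ ∃ b : Fin 2 → ℝ, IsNash d C b := by
  rintro ⟨b, hb⟩
  have h01 := hb.lt hd (hCdiff 0) (hCconv 0) (hCmono 0) (show (0 : Fin 2) ≠ 1 by decide)
  have h10 := hb.lt hd (hCdiff 1) (hCconv 1) (hCmono 1) (show (1 : Fin 2) ≠ 0 by decide)
  exact h01.asymm h10

/-- with `n = 2` data holders, the oligopoly privacy game has no
Nash equilibrium. -/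
theorem stmt_9 (d : ℝ) (hd : 0 < d) (C : Fin 2 → ℝ → ℝ)
    (hCdiff : ∀ i, DifferentiableOn ℝ (C i) (Set.Ici 0))
    (hCconv : ∀ i, ConvexOn ℝ (Set.Ici 0) (C i))
    (hCmono : ∀ i, StrictMonoOn (C i) (Set.Ici 0))
    (hC0 : ∀ i, C i 0 = 0) :
    ¬ ∃ b : Fin 2 → ℝ, IsNash d C b :=
  stmt_9_general d hd C hCdiff hCconv hCmono
end

section
/- For a convex, strictly increasing, differentiable cost function C with C(0) = 0 and C'(0) > 0, define D(q) = (1 + q/(d − 2q))·C(q) − ∫_0^q d/(d − 2x)² · C(x) dx on [0, d/2). Then D is differentiable with D'(q) = (1 + q/(d − 2q))·C'(q), and D is strictly increasing and strictly convex on [0, d/2). -/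
open intervalIntegral Set

/-! The weight `w q = 1 + q / (d - 2q)` has derivative `d / (d - 2q)²`, so the integral in `D`
is exactly the term `w' C` that the product rule produces when differentiating `w C`; hence
`D' = w C'`. On `[0, d/2)` the weight is positive and strictly increasing, while `C'` is
positive (it is monotone since `C` is convex, and `C' 0 > 0`), so `D'` is positive and strictly increasing. -/

theorem StrictMonoOn.mul_monotoneOn {α : Type*} [Preorder α] {f g : α → ℝ} {s : Set α}
    (hf : StrictMonoOn f s) (hg : MonotoneOn g s) (hf₀ : ∀ x ∈ s, 0 ≤ f x)
    (hg₀ : ∀ x ∈ s, 0 < g x) : StrictMonoOn (fun x => f x * g x) s :=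
  fun _ hx _ hy hxy => mul_lt_mul (hf hx hy hxy) (hg hx hy hxy.le) (hg₀ _ hx) (hf₀ _ hy)

theorem hasDerivAt_mul_sub_integral_deriv_mul {g g' C : ℝ → ℝ} {U : Set ℝ} {a q C' : ℝ}
    (hU : IsOpen U) (haq : uIcc a q ⊆ U) (hcont : ContinuousOn (fun x => g' x * C x) U)
    (hg : HasDerivAt g (g' q) q) (hC : HasDerivAt C C' q) :
    HasDerivAt (fun u => g u * C u - ∫ x in a..u, g' x * C x) (g q * C') q := by
  have hqU : U ∈ nhds q := hU.mem_nhds (haq right_mem_uIcc)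
  have hint : HasDerivAt (fun u => ∫ x in a..u, g' x * C x) (g' q * C q) q :=
    integral_hasDerivAt_right ((hcont.mono haq).intervalIntegrable)
      ⟨U, hqU, hcont.aestronglyMeasurable hU.measurableSet⟩ (hcont.continuousAt hqU)
  exact ((hg.mul hC).sub hint).congr_deriv (by ring)

theorem hasDerivAt_one_add_div_sub_two_mul {d q : ℝ} (hq : d - 2 * q ≠ 0) :
    HasDerivAt (fun x => 1 + x / (d - 2 * x)) (d / (d - 2 * q) ^ 2) q := by
  have hden : HasDerivAt (fun x => d - 2 * x) (-2) q := by
    simpa using ((hasDerivAt_id q).const_mul 2).const_sub d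
  exact (((hasDerivAt_id' q).div hden hq).const_add 1).congr_deriv (by ring)

theorem strictMonoOn_one_add_div_sub_two_mul {d : ℝ} (hd : 0 < d) :
    StrictMonoOn (fun x => 1 + x / (d - 2 * x)) (Iio (d / 2)) := by
  intro x hx y hy hxy
  have hdx : 0 < d - 2 * x := by linarith [mem_Iio.1 hx]
  have hdy : 0 < d - 2 * y := by linarith [mem_Iio.1 hy]
  have : x / (d - 2 * x) < y / (d - 2 * y) := by
    rw [div_lt_div_iff₀ hdx hdy]
    nlinarith
  simpa using this

theorem one_le_one_add_div_sub_two_mul {d q : ℝ} (hq : q ∈ Ico 0 (d / 2)) :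
    1 ≤ 1 + q / (d - 2 * q) := by
  have : 0 ≤ q / (d - 2 * q) := div_nonneg hq.1 (by linarith [hq.2])
  linarith

theorem hasDerivAt_effectiveCost {d q C' : ℝ} {C : ℝ → ℝ} (hq : q ∈ Ico 0 (d / 2))
    (hC : ContinuousOn C (Iio (d / 2))) (hCq : HasDerivAt C C' q) :
    HasDerivAt
      (fun u => (1 + u / (d - 2 * u)) * C u - ∫ x in (0 : ℝ)..u, d / (d - 2 * x) ^ 2 * C x)
      ((1 + q / (d - 2 * q)) * C') q := by
  have hden : ∀ x ∈ Iio (d / 2), d - 2 * x ≠ 0 := fun x hx => by linarith [mem_Iio.1 hx]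
  refine hasDerivAt_mul_sub_integral_deriv_mul (U := Iio (d / 2)) isOpen_Iio ?_ ?_
    (hasDerivAt_one_add_div_sub_two_mul (hden q hq.2)) hCq
  · rw [uIcc_of_le hq.1]
    exact fun x hx => lt_of_le_of_lt hx.2 hq.2
  · refine ContinuousOn.mul ?_ hC
    exact continuousOn_const.div (by fun_prop) fun x hx => pow_ne_zero 2 (hden x hx)

theorem stmt_10_general (d : ℝ) (hd : 0 < d) (C : ℝ → ℝ)
    (hCdiff : Differentiable ℝ C)
    (hCconv : ConvexOn ℝ (Set.Ici 0) C)
    (hC'0 : 0 < deriv C 0)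
    (D : ℝ → ℝ)
    (hD : ∀ q ∈ Set.Ico 0 (d / 2),
      D q = (1 + q / (d - 2 * q)) * C q - ∫ x in (0 : ℝ)..q, d / (d - 2 * x) ^ 2 * C x) :
    (∀ q ∈ Set.Ico 0 (d / 2),
        HasDerivWithinAt D ((1 + q / (d - 2 * q)) * deriv C q) (Set.Ico 0 (d / 2)) q) ∧
      StrictMonoOn D (Set.Ico 0 (d / 2)) ∧
      StrictConvexOn ℝ (Set.Ico 0 (d / 2)) D := by
  set s : Set ℝ := Ico 0 (d / 2)
  have hderiv : ∀ q ∈ s, HasDerivWithinAt D ((1 + q / (d - 2 * q)) * deriv C q) s q :=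
    fun q hq => ((hasDerivAt_effectiveCost hq hCdiff.continuous.continuousOn
      (hCdiff q).hasDerivAt).hasDerivWithinAt).congr hD (hD q hq)
  have hcont : ContinuousOn D s := fun q hq => (hderiv q hq).continuousWithinAt
  have hderivD : ∀ q ∈ interior s, deriv D q = (1 + q / (d - 2 * q)) * deriv C q :=
    fun q hq => ((hderiv q (interior_subset hq)).hasDerivAt (mem_interior_iff_mem_nhds.1 hq)).deriv
  have hC'mono : MonotoneOn (deriv C) s :=
    (hCconv.monotoneOn_deriv fun x _ => hCdiff x).mono fun x hx => hx.1
  have hC'pos : ∀ q ∈ s, 0 < deriv C q := fun q hq =>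
    hC'0.trans_le (hC'mono ⟨le_rfl, half_pos hd⟩ hq hq.1)
  have hD'mono : StrictMonoOn (fun q => (1 + q / (d - 2 * q)) * deriv C q) s :=
    ((strictMonoOn_one_add_div_sub_two_mul hd).mono fun x hx => hx.2).mul_monotoneOn hC'mono
      (fun q hq => zero_le_one.trans (one_le_one_add_div_sub_two_mul hq)) hC'pos
  refine ⟨hderiv, strictMonoOn_of_deriv_pos (convex_Ico _ _) hcont fun q hq => ?_,
    StrictMonoOn.strictConvexOn_of_deriv (convex_Ico _ _) hcont ?_⟩
  · rw [hderivD q hq]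
    have hqs := interior_subset hq
    exact mul_pos (one_pos.trans_le (one_le_one_add_div_sub_two_mul hqs)) (hC'pos q hqs)
  · intro x hx y hy hxy
    rw [hderivD x hx, hderivD y hy]
    exact hD'mono (interior_subset hx) (interior_subset hy) hxy

/-- for a convex, strictly increasing, differentiable cost `C` with
`C 0 = 0` and `C' 0 > 0`, the effective cost
`D(q) = (1 + q/(d − 2q)) C(q) − ∫_0^q d/(d − 2x)² C(x) dx`
is differentiable on `[0, d/2)` with `D'(q) = (1 + q/(d − 2q)) C'(q)`, and `D` is
strictly increasing and strictly convex on `[0, d/2)`. -/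
theorem stmt_10 (d : ℝ) (hd : 0 < d) (C : ℝ → ℝ)
    (hCdiff : Differentiable ℝ C)
    (hCconv : ConvexOn ℝ (Set.Ici 0) C)
    (hCmono : StrictMonoOn C (Set.Ici 0))
    (hC0 : C 0 = 0) (hC'0 : 0 < deriv C 0)
    (D : ℝ → ℝ)
    (hD : ∀ q ∈ Set.Ico 0 (d / 2),
      D q = (1 + q / (d - 2 * q)) * C q - ∫ x in (0 : ℝ)..q, d / (d - 2 * x) ^ 2 * C x) :
    (∀ q ∈ Set.Ico 0 (d / 2),
        HasDerivWithinAt D ((1 + q / (d - 2 * q)) * deriv C q) (Set.Ico 0 (d / 2)) q) ∧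
      StrictMonoOn D (Set.Ico 0 (d / 2)) ∧
      StrictConvexOn ℝ (Set.Ico 0 (d / 2)) D :=
  stmt_10_general d hd C hCdiff hCconv hC'0 D hD
end
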